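/- arXiv:1707.08605 — 5 statements merged into one kernel-verified Lean document; each statement's English description precedes it below -/
import Mathlib

section
/- Let R be a commutative ring, I = (f_1, ..., f_n) an ideal, f ∈ R, and A = R[T_1,...,T_n]/(f_1T_1 + ... + f_nT_n + f) the forcing algebra. Then f ∈ I if and only if there exists a homomorphism of R-algebras from A to R. -/
/-! An `R`-algebra map from `A` to `R` is the same as a point `x ∈ Rⁿ` on which the forcing
equation vanishes, `∑ fᵢ xᵢ + f = 0`; such a point, negated, writes `f` as a combination of
the `fᵢ`. -/

open MvPolynomial

theorem Ideal.Quotient.nonempty_algHom_span_singleton_iff {R A B : Type*} [CommSemiring R]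
    [CommRing A] [Algebra R A] [Semiring B] [Algebra R B] (a : A) :
    Nonempty ((A ⧸ Ideal.span {a}) →ₐ[R] B) ↔ ∃ φ : A →ₐ[R] B, φ a = 0 := by
  constructor
  · rintro ⟨ψ⟩
    refine ⟨ψ.comp (Ideal.Quotient.mkₐ R _), ?_⟩
    simp [Ideal.Quotient.eq_zero_iff_mem.mpr (Ideal.mem_span_singleton_self a)]
  · rintro ⟨φ, hφ⟩
    refine ⟨Ideal.Quotient.liftₐ _ φ fun b hb => ?_⟩
    obtain ⟨c, rfl⟩ := Ideal.mem_span_singleton'.mp hb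
    rw [map_mul, hφ, mul_zero]

theorem MvPolynomial.exists_algHom_apply_eq_zero_iff {σ R S : Type*} [CommSemiring R]
    [CommSemiring S] [Algebra R S] (p : MvPolynomial σ R) :
    (∃ φ : MvPolynomial σ R →ₐ[R] S, φ p = 0) ↔ ∃ x : σ → S, aeval x p = 0 :=
  ⟨fun ⟨φ, hφ⟩ => ⟨φ ∘ X, by rwa [← aeval_unique φ]⟩, fun ⟨x, hx⟩ => ⟨aeval x, hx⟩⟩

theorem MvPolynomial.aeval_sum_C_mul_X_add_C {ι R : Type*} [CommSemiring R] [Fintype ι]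
    (f : ι → R) (f₀ : R) (x : ι → R) :
    aeval x (∑ i, C (f i) * X i + C f₀) = ∑ i, f i * x i + f₀ := by
  simp

theorem Ideal.mem_span_range_iff_exists_sum_mul_add_eq_zero {ι R : Type*} [CommRing R]
    [Fintype ι] (f : ι → R) (f₀ : R) :
    f₀ ∈ Ideal.span (Set.range f) ↔ ∃ x : ι → R, ∑ i, f i * x i + f₀ = 0 := by
  have sum_neg (x : ι → R) : ∑ i, f i * (-x) i = -∑ i, x i * f i := by
    simp [mul_comm]
  rw [Ideal.mem_span_range_iff_exists_fun]
  constructor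
  · rintro ⟨c, hc⟩
    exact ⟨-c, by rw [sum_neg, hc, neg_add_cancel]⟩
  · rintro ⟨x, hx⟩
    rw [← neg_neg x, sum_neg] at hx
    exact ⟨-x, neg_add_eq_zero.mp hx⟩

theorem forcing_algebra_section_iff_mem {R : Type*} [CommRing R] (n : ℕ)
    (f : Fin n → R) (f₀ : R) (h : MvPolynomial (Fin n) R)
    (hh : h = ∑ i, C (f i) * X i + C f₀) :
    f₀ ∈ Ideal.span (Set.range f) ↔
      Nonempty ((MvPolynomial (Fin n) R ⧸ Ideal.span {h}) →ₐ[R] R) := by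
  simp only [Ideal.Quotient.nonempty_algHom_span_singleton_iff, exists_algHom_apply_eq_zero_iff,
    hh, aeval_sum_C_mul_X_add_C]
  exact Ideal.mem_span_range_iff_exists_sum_mul_add_eq_zero f f₀
end

section
/- Let R be a commutative ring, I = (f_1,...,f_n) an ideal, f ∈ R, and A the forcing algebra for this data. Then f belongs to the radical of I if and only if the induced morphism Spec A → Spec R is surjective, i.e., for every prime ideal p of R the fiber ring κ(p) ⊗_R A is nonzero. -/
/-!
Both sides amount to the same condition at every prime `p`: if all `fᵢ` lie in `p`, so does `f₀`.
For the radical this is `√I = ⋂_{p ⊇ I} p`. For the fiber, `κ(p) ⊗_R A` is nonzero exactly when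
the affine equation `∑ fᵢ Tᵢ + f₀ = 0` has a solution in `κ(p)`: a solution gives a `κ(p)`-point
of the fiber, and conversely, if all `fᵢ` vanish in `κ(p)`, the relation makes `f₀` zero in the
nonzero `κ(p)`-algebra `κ(p) ⊗_R A`, into which the field `κ(p)` embeds. Over a field, such an
equation is solvable unless all coefficients vanish while the constant term does not.
-/

open MvPolynomial TensorProduct

theorem Ideal.mem_radical_span_range_iff {R ι : Type*} [CommRing R] (f : ι → R) (r : R) :
    r ∈ (Ideal.span (Set.range f)).radical ↔
      ∀ p : Ideal R, p.IsPrime → (∀ i, f i ∈ p) → r ∈ p := by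
  simp only [Ideal.radical_eq_sInf, Ideal.mem_sInf, Set.mem_ofPred_eq, Ideal.span_le,
    Set.range_subset_iff, SetLike.mem_coe, and_imp]
  exact ⟨fun H p hp hf => H hf hp, fun H p hf hp => H p hp hf⟩

theorem exists_sum_mul_add_eq_zero_iff {K σ : Type*} [Field K] [Fintype σ] (a : σ → K) (b : K) :
    (∃ x : σ → K, ∑ i, a i * x i + b = 0) ↔ ((∀ i, a i = 0) → b = 0) := by
  classical
  refine ⟨fun ⟨x, hx⟩ ha => by simpa [ha] using hx, fun H => ?_⟩
  by_cases ha : ∀ i, a i = 0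
  · exact ⟨0, by simp [H ha]⟩
  · obtain ⟨i₀, hi₀⟩ := not_forall.mp ha
    refine ⟨Pi.single i₀ (-b / a i₀), ?_⟩
    simp [Pi.single_apply, mul_div_cancel₀ _ hi₀]

section ForcingAlgebra

variable {R σ : Type*} [CommRing R] [Fintype σ] (f : σ → R) (f₀ : R)

noncomputable def forcingPolynomial : MvPolynomial σ R :=
  ∑ i, C (f i) * X i + C f₀

theorem aeval_forcingPolynomial {S : Type*} [CommRing S] [Algebra R S] (x : σ → S) :
    aeval x (forcingPolynomial f f₀) = ∑ i, algebraMap R S (f i) * x i + algebraMap R S f₀ := by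
  simp [forcingPolynomial]

variable {f f₀} (K : Type*) [Field K] [Algebra R K]

theorem algebraMap_eq_zero_of_aeval_forcingPolynomial_eq_zero {A : Type*} [CommRing A]
    [Algebra R A] [Nontrivial (K ⊗[R] A)] {y : σ → A}
    (hy : aeval y (forcingPolynomial f f₀) = 0)
    (hf : ∀ i, algebraMap R K (f i) = 0) : algebraMap R K f₀ = 0 := by
  have hz := congrArg (Algebra.TensorProduct.includeRight (R := R) (A := K)) hy
  rw [comp_aeval_apply, map_zero, aeval_forcingPolynomial] at hz
  simp only [IsScalarTower.algebraMap_apply R K (K ⊗[R] A), hf, map_zero, zero_mul,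
    Finset.sum_const_zero, zero_add] at hz
  exact (algebraMap K (K ⊗[R] A)).injective (hz.trans (map_zero _).symm)

theorem nontrivial_tensor_forcingAlgebra_iff :
    Nontrivial (K ⊗[R] (MvPolynomial σ R ⧸ Ideal.span {forcingPolynomial f f₀})) ↔
      ∃ x : σ → K, ∑ i, algebraMap R K (f i) * x i + algebraMap R K f₀ = 0 := by
  set I := Ideal.span {forcingPolynomial f f₀}
  constructor
  · intro _
    rw [exists_sum_mul_add_eq_zero_iff]
    refine algebraMap_eq_zero_of_aeval_forcingPolynomial_eq_zero K
      (y := fun i => Ideal.Quotient.mk I (X i)) ?_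
    rw [← Ideal.Quotient.mkₐ_eq_mk R, ← comp_aeval_apply, aeval_X_left_apply,
      Ideal.Quotient.mkₐ_eq_mk, Ideal.Quotient.eq_zero_iff_mem]
    exact Ideal.mem_span_singleton_self _
  · rintro ⟨x, hx⟩
    let ψ : MvPolynomial σ R ⧸ I →ₐ[R] K := Ideal.Quotient.liftₐ _ (aeval x) fun a ha => by
      obtain ⟨c, rfl⟩ := Ideal.mem_span_singleton'.mp ha
      rw [map_mul, aeval_forcingPolynomial, hx, mul_zero]
    exact (Algebra.TensorProduct.productMap (AlgHom.id R K) ψ).domain_nontrivial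

end ForcingAlgebra

theorem forcing_algebra_radical_iff_fibers_nonzero {R : Type*} [CommRing R] (n : ℕ)
    (f : Fin n → R) (f₀ : R) (h : MvPolynomial (Fin n) R)
    (hh : h = ∑ i, C (f i) * X i + C f₀) :
    f₀ ∈ (Ideal.span (Set.range f)).radical ↔
      ∀ (p : Ideal R) [p.IsPrime],
        Nontrivial (TensorProduct R (IsLocalRing.ResidueField (Localization.AtPrime p))
          (MvPolynomial (Fin n) R ⧸ Ideal.span {h})) := by
  rw [hh, Ideal.mem_radical_span_range_iff]
  refine forall_congr' fun p => forall_congr' fun _ => ?_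
  rw [← forcingPolynomial, nontrivial_tensor_forcingAlgebra_iff, exists_sum_mul_add_eq_zero_iff]
  simp only [Ideal.algebraMap_residueField_eq_zero]
end

section
/- Let R be a commutative ring and A the forcing algebra for data f_1,...,f_n, f. Then for each i, the localization A_{f_i} of the forcing algebra at f_i is isomorphic as an R_{f_i}-algebra to the polynomial ring R_{f_i}[T_1,...,T_{i-1},T_{i+1},...,T_n]. -/
open MvPolynomial

section Aux

variable {R : Type*} [CommRing R] {n : ℕ} (f : Fin n → R) (f₀ : R) (i : Fin n)

noncomputable def forcingS : MvPolynomial {j : Fin n // j ≠ i} (Localization.Away (f i)) :=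
  (∑ k : {j : Fin n // j ≠ i}, C (algebraMap R (Localization.Away (f i)) (f k)) * X k)
    + C (algebraMap R (Localization.Away (f i)) f₀)

noncomputable def forcingG (j : Fin n) :
    MvPolynomial {j : Fin n // j ≠ i} (Localization.Away (f i)) :=
  if hj : j = i then
    -(C (IsLocalization.Away.invSelf (S := Localization.Away (f i)) (f i))) * forcingS f f₀ i
  else X ⟨j, hj⟩

noncomputable def forcingPsi' :
    MvPolynomial (Fin n) R →ₐ[R] MvPolynomial {j : Fin n // j ≠ i} (Localization.Away (f i)) :=
  aeval (forcingG f f₀ i)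

lemma forcingPsi'_h : forcingPsi' f f₀ i ((∑ j, C (f j) * X j) + C f₀) = 0 := by
  classical
  have hu : C (algebraMap R (Localization.Away (f i)) (f i)) *
      C (IsLocalization.Away.invSelf (S := Localization.Away (f i)) (f i)) =
      (1 : MvPolynomial {j : Fin n // j ≠ i} (Localization.Away (f i))) := by
    rw [← C_mul, IsLocalization.Away.mul_invSelf, C_1]
  have hrest : ∑ j ∈ ({i}ᶜ : Finset (Fin n)),
      (C (algebraMap R (Localization.Away (f i)) (f j)) * forcingG f f₀ i j) =
      ∑ k : {j : Fin n // j ≠ i},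
        C (algebraMap R (Localization.Away (f i)) (f k)) * X k := by
    rw [Finset.sum_subtype (p := fun j => j ≠ i) ({i}ᶜ : Finset (Fin n))
      (fun x => by simp) (fun j =>
        C (algebraMap R (Localization.Away (f i)) (f j)) * forcingG f f₀ i j)]
    refine Fintype.sum_congr _ _ fun k => ?_
    rw [forcingG, dif_neg k.prop]
  rw [forcingPsi']
  simp only [map_add, map_sum, map_mul, aeval_C, aeval_X, MvPolynomial.algebraMap_apply]
  rw [Fintype.sum_eq_add_sum_compl i
      (fun j => C (algebraMap R (Localization.Away (f i)) (f j)) * forcingG f f₀ i j), hrest]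
  rw [forcingG, dif_pos rfl]
  rw [show C (algebraMap R (Localization.Away (f i)) (f i)) *
      (-(C (IsLocalization.Away.invSelf (S := Localization.Away (f i)) (f i))) * forcingS f f₀ i)
      = -(C (algebraMap R (Localization.Away (f i)) (f i)) *
        C (IsLocalization.Away.invSelf (S := Localization.Away (f i)) (f i)) * forcingS f f₀ i)
      by ring, hu, one_mul, forcingS]
  ring

section Quot

variable (h : MvPolynomial (Fin n) R)

lemma forcingPsi'_vanish (hh : h = (∑ j, C (f j) * X j) + C f₀) : ∀ a ∈ Ideal.span {h}, forcingPsi' f f₀ i a = 0 := by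
  intro a ha
  rw [Ideal.mem_span_singleton] at ha
  obtain ⟨c, rfl⟩ := ha
  rw [map_mul, hh, forcingPsi'_h, zero_mul]

noncomputable def forcingPsi (hh : h = (∑ j, C (f j) * X j) + C f₀) :
    (MvPolynomial (Fin n) R ⧸ Ideal.span {h}) →ₐ[R]
      MvPolynomial {j : Fin n // j ≠ i} (Localization.Away (f i)) :=
  Ideal.Quotient.liftₐ _ (forcingPsi' f f₀ i) (forcingPsi'_vanish f f₀ i h hh)

lemma forcingPsi_mk (hh : h = (∑ j, C (f j) * X j) + C f₀) (p : MvPolynomial (Fin n) R) :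
    forcingPsi f f₀ i h hh (Ideal.Quotient.mk _ p) = forcingPsi' f f₀ i p := rfl

lemma forcingPsi_unit (hh : h = (∑ j, C (f j) * X j) + C f₀) :
    IsUnit (forcingPsi f f₀ i h hh (Ideal.Quotient.mk (Ideal.span {h}) (C (f i)))) := by
  rw [forcingPsi_mk, forcingPsi', aeval_C, MvPolynomial.algebraMap_apply]
  refine IsUnit.of_mul_eq_one
    (C (IsLocalization.Away.invSelf (S := Localization.Away (f i)) (f i))) ?_
  rw [← C_mul, IsLocalization.Away.mul_invSelf, C_1]

variable (Aᵢ : Type*) [CommRing Aᵢ]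
    [Algebra (MvPolynomial (Fin n) R ⧸ Ideal.span {h}) Aᵢ]
    [IsLocalization.Away (Ideal.Quotient.mk (Ideal.span {h}) (C (f i))) Aᵢ]
    [Algebra R Aᵢ] [IsScalarTower R (MvPolynomial (Fin n) R ⧸ Ideal.span {h}) Aᵢ]
    [Algebra (Localization.Away (f i)) Aᵢ]
    [IsScalarTower R (Localization.Away (f i)) Aᵢ]

noncomputable def forcingAlpha (hh : h = (∑ j, C (f j) * X j) + C f₀) :
    Aᵢ →+* MvPolynomial {j : Fin n // j ≠ i} (Localization.Away (f i)) :=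
  IsLocalization.Away.lift (Ideal.Quotient.mk (Ideal.span {h}) (C (f i)))
    (g := (forcingPsi f f₀ i h hh).toRingHom) (forcingPsi_unit f f₀ i h hh)

omit [Algebra R Aᵢ] [IsScalarTower R (MvPolynomial (Fin n) R ⧸ Ideal.span {h}) Aᵢ]
  [Algebra (Localization.Away (f i)) Aᵢ] [IsScalarTower R (Localization.Away (f i)) Aᵢ] in
lemma forcingAlpha_mk (hh : h = (∑ j, C (f j) * X j) + C f₀)
    (q : MvPolynomial (Fin n) R ⧸ Ideal.span {h}) :
    forcingAlpha f f₀ i h Aᵢ hh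
      (algebraMap (MvPolynomial (Fin n) R ⧸ Ideal.span {h}) Aᵢ q) =
      forcingPsi f f₀ i h hh q :=
  IsLocalization.Away.lift_eq _ _ _

noncomputable def forcingBeta :
    MvPolynomial {j : Fin n // j ≠ i} (Localization.Away (f i)) →ₐ[Localization.Away (f i)] Aᵢ :=
  aeval fun k : {j : Fin n // j ≠ i} =>
    algebraMap (MvPolynomial (Fin n) R ⧸ Ideal.span {h}) Aᵢ
      (Ideal.Quotient.mk (Ideal.span {h}) (X k.val))

lemma forcingAlpha_commutes (hh : h = (∑ j, C (f j) * X j) + C f₀) (r : Localization.Away (f i)) :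
    forcingAlpha f f₀ i h Aᵢ hh (algebraMap (Localization.Away (f i)) Aᵢ r) =
      algebraMap (Localization.Away (f i))
        (MvPolynomial {j : Fin n // j ≠ i} (Localization.Away (f i))) r := by
  have : (forcingAlpha f f₀ i h Aᵢ hh).comp
      (algebraMap (Localization.Away (f i)) Aᵢ) =
      algebraMap (Localization.Away (f i))
        (MvPolynomial {j : Fin n // j ≠ i} (Localization.Away (f i))) := by
    apply IsLocalization.ringHom_ext (Submonoid.powers (f i))
    refine RingHom.ext fun r => ?_
    simp only [RingHom.coe_comp, Function.comp_apply]
    rw [← IsScalarTower.algebraMap_apply R (Localization.Away (f i)) Aᵢ,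
      IsScalarTower.algebraMap_apply R (MvPolynomial (Fin n) R ⧸ Ideal.span {h}) Aᵢ,
      forcingAlpha_mk,
      IsScalarTower.algebraMap_apply R (MvPolynomial (Fin n) R)
        (MvPolynomial (Fin n) R ⧸ Ideal.span {h}),
      Ideal.Quotient.algebraMap_eq, forcingPsi_mk, ← IsScalarTower.algebraMap_apply R (Localization.Away (f i))
        (MvPolynomial {j : Fin n // j ≠ i} (Localization.Away (f i)))]
    rw [show algebraMap R (MvPolynomial (Fin n) R) r = C r from rfl, forcingPsi', aeval_C]
  exact RingHom.congr_fun this r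

include f₀ in
set_option synthInstance.maxHeartbeats 1000000 in
lemma forcing_relation (hh : h = (∑ j, C (f j) * X j) + C f₀) :
    (∑ j, algebraMap R Aᵢ (f j) *
      algebraMap (MvPolynomial (Fin n) R ⧸ Ideal.span {h}) Aᵢ
        (Ideal.Quotient.mk (Ideal.span {h}) (X j)))
      + algebraMap R Aᵢ f₀ = 0 := by
  have hC : ∀ r : R, algebraMap (MvPolynomial (Fin n) R ⧸ Ideal.span {h}) Aᵢ
      (Ideal.Quotient.mk (Ideal.span {h}) (C r)) = algebraMap R Aᵢ r := by
    intro r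
    rw [show (C r : MvPolynomial (Fin n) R) = algebraMap R (MvPolynomial (Fin n) R) r from rfl,
      ← Ideal.Quotient.algebraMap_eq,
      ← IsScalarTower.algebraMap_apply R (MvPolynomial (Fin n) R)
        (MvPolynomial (Fin n) R ⧸ Ideal.span {h}),
      ← IsScalarTower.algebraMap_apply R (MvPolynomial (Fin n) R ⧸ Ideal.span {h}) Aᵢ]
  have h0 : algebraMap (MvPolynomial (Fin n) R ⧸ Ideal.span {h}) Aᵢ
      (Ideal.Quotient.mk (Ideal.span {h}) ((∑ j, C (f j) * X j) + C f₀)) = 0 := by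
    rw [← hh, Ideal.Quotient.eq_zero_iff_mem.mpr (Ideal.mem_span_singleton_self h), map_zero]
  simp only [map_add, map_sum, map_mul, hC] at h0
  exact h0

lemma forcingBeta_psi (hh : h = (∑ j, C (f j) * X j) + C f₀)
    (q : MvPolynomial (Fin n) R ⧸ Ideal.span {h}) :
    forcingBeta f i h Aᵢ (forcingPsi f f₀ i h hh q) =
      algebraMap (MvPolynomial (Fin n) R ⧸ Ideal.span {h}) Aᵢ q := by
  classical
  have hC : ∀ r : R, algebraMap (MvPolynomial (Fin n) R ⧸ Ideal.span {h}) Aᵢ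
      (Ideal.Quotient.mk (Ideal.span {h}) (C r)) = algebraMap R Aᵢ r := by
    intro r
    rw [show (C r : MvPolynomial (Fin n) R) = algebraMap R (MvPolynomial (Fin n) R) r from rfl,
      ← Ideal.Quotient.algebraMap_eq,
      ← IsScalarTower.algebraMap_apply R (MvPolynomial (Fin n) R)
        (MvPolynomial (Fin n) R ⧸ Ideal.span {h}),
      ← IsScalarTower.algebraMap_apply R (MvPolynomial (Fin n) R ⧸ Ideal.span {h}) Aᵢ]
  have hbC : ∀ r : R, forcingBeta f i h Aᵢ (C (algebraMap R (Localization.Away (f i)) r)) =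
      algebraMap R Aᵢ r := by
    intro r
    rw [forcingBeta, aeval_C, ← IsScalarTower.algebraMap_apply R (Localization.Away (f i)) Aᵢ]
  have hbS : forcingBeta f i h Aᵢ (forcingS f f₀ i) =
      -(algebraMap R Aᵢ (f i) *
        algebraMap (MvPolynomial (Fin n) R ⧸ Ideal.span {h}) Aᵢ
          (Ideal.Quotient.mk (Ideal.span {h}) (X i))) := by
    rw [forcingS]
    simp only [map_add, map_sum, map_mul, hbC]
    have hsub : ∑ k : {j : Fin n // j ≠ i},
        algebraMap R Aᵢ (f k) * forcingBeta f i h Aᵢ (X k) =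
        ∑ j ∈ ({i}ᶜ : Finset (Fin n)), algebraMap R Aᵢ (f j) *
          algebraMap (MvPolynomial (Fin n) R ⧸ Ideal.span {h}) Aᵢ
            (Ideal.Quotient.mk (Ideal.span {h}) (X j)) := by
      rw [Finset.sum_subtype (p := fun j => j ≠ i) ({i}ᶜ : Finset (Fin n))
        (fun x => by simp) (fun j => algebraMap R Aᵢ (f j) *
          algebraMap (MvPolynomial (Fin n) R ⧸ Ideal.span {h}) Aᵢ
            (Ideal.Quotient.mk (Ideal.span {h}) (X j)))]
      refine Fintype.sum_congr _ _ fun k => ?_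
      rw [forcingBeta, aeval_X]
    rw [hsub]
    have hrel := forcing_relation f f₀ h Aᵢ hh
    rw [Fintype.sum_eq_add_sum_compl i (fun j => algebraMap R Aᵢ (f j) *
      algebraMap (MvPolynomial (Fin n) R ⧸ Ideal.span {h}) Aᵢ
        (Ideal.Quotient.mk (Ideal.span {h}) (X j)))] at hrel
    linear_combination hrel
  have hu : algebraMap (Localization.Away (f i)) Aᵢ
      (IsLocalization.Away.invSelf (S := Localization.Away (f i)) (f i)) *
      algebraMap R Aᵢ (f i) = 1 := by
    rw [IsScalarTower.algebraMap_apply R (Localization.Away (f i)) Aᵢ, mul_comm,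
      ← map_mul, IsLocalization.Away.mul_invSelf, map_one]
  have key : (forcingBeta f i h Aᵢ).toRingHom.comp
      (forcingPsi f f₀ i h hh).toRingHom =
      algebraMap (MvPolynomial (Fin n) R ⧸ Ideal.span {h}) Aᵢ := by
    apply Ideal.Quotient.ringHom_ext
    apply MvPolynomial.ringHom_ext
    · intro r
      simp only [RingHom.coe_comp, Function.comp_apply, AlgHom.toRingHom_eq_coe,
        RingHom.coe_coe]
      rw [forcingPsi_mk, forcingPsi', aeval_C, MvPolynomial.algebraMap_apply, hbC]
      exact (hC r).symm
    · intro j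
      simp only [RingHom.coe_comp, Function.comp_apply, AlgHom.toRingHom_eq_coe,
        RingHom.coe_coe]
      rw [forcingPsi_mk, forcingPsi', aeval_X, forcingG]
      by_cases hj : j = i
      · subst hj
        rw [dif_pos rfl]
        rw [map_mul, map_neg]
        have hCu : forcingBeta f j h Aᵢ
            (C (IsLocalization.Away.invSelf (S := Localization.Away (f j)) (f j))) =
            algebraMap (Localization.Away (f j)) Aᵢ
              (IsLocalization.Away.invSelf (S := Localization.Away (f j)) (f j)) := by
          rw [forcingBeta, aeval_C]
        rw [hCu, hbS]
        calc -(algebraMap (Localization.Away (f j)) Aᵢ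
              (IsLocalization.Away.invSelf (S := Localization.Away (f j)) (f j))) *
              -(algebraMap R Aᵢ (f j) *
                algebraMap (MvPolynomial (Fin n) R ⧸ Ideal.span {h}) Aᵢ
                  (Ideal.Quotient.mk (Ideal.span {h}) (X j)))
            = (algebraMap (Localization.Away (f j)) Aᵢ
              (IsLocalization.Away.invSelf (S := Localization.Away (f j)) (f j)) *
              algebraMap R Aᵢ (f j)) *
              algebraMap (MvPolynomial (Fin n) R ⧸ Ideal.span {h}) Aᵢ
                  (Ideal.Quotient.mk (Ideal.span {h}) (X j)) := by ring
          _ = algebraMap (MvPolynomial (Fin n) R ⧸ Ideal.span {h}) Aᵢ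
                  (Ideal.Quotient.mk (Ideal.span {h}) (X j)) := by rw [hu, one_mul]
      · rw [dif_neg hj, forcingBeta, aeval_X]
  exact RingHom.congr_fun key q

lemma forcingAlpha_beta (hh : h = (∑ j, C (f j) * X j) + C f₀)
    (p : MvPolynomial {j : Fin n // j ≠ i} (Localization.Away (f i))) :
    forcingAlpha f f₀ i h Aᵢ hh (forcingBeta f i h Aᵢ p) = p := by
  have key : (forcingAlpha f f₀ i h Aᵢ hh).comp (forcingBeta f i h Aᵢ).toRingHom =
      RingHom.id _ := by
    apply MvPolynomial.ringHom_ext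
    · intro s
      simp only [RingHom.coe_comp, Function.comp_apply, AlgHom.toRingHom_eq_coe,
        RingHom.coe_coe, RingHom.id_apply]
      rw [forcingBeta, aeval_C, forcingAlpha_commutes]
      rfl
    · intro k
      simp only [RingHom.coe_comp, Function.comp_apply, AlgHom.toRingHom_eq_coe,
        RingHom.coe_coe, RingHom.id_apply]
      rw [forcingBeta, aeval_X, forcingAlpha_mk, forcingPsi_mk, forcingPsi', aeval_X,
        forcingG, dif_neg k.prop]
  exact RingHom.congr_fun key p

lemma forcingBeta_alpha (hh : h = (∑ j, C (f j) * X j) + C f₀) (x : Aᵢ) :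
    forcingBeta f i h Aᵢ (forcingAlpha f f₀ i h Aᵢ hh x) = x := by
  have key : (forcingBeta f i h Aᵢ).toRingHom.comp (forcingAlpha f f₀ i h Aᵢ hh) =
      RingHom.id Aᵢ := by
    apply IsLocalization.ringHom_ext
      (Submonoid.powers (Ideal.Quotient.mk (Ideal.span {h}) (C (f i))))
    refine RingHom.ext fun q => ?_
    simp only [RingHom.coe_comp, Function.comp_apply, AlgHom.toRingHom_eq_coe,
      RingHom.coe_coe, RingHom.id_apply]
    rw [forcingAlpha_mk, forcingBeta_psi]
  exact RingHom.congr_fun key x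

end Quot

end Aux

theorem forcing_algebra_localization_at_fi {R : Type*} [CommRing R] (n : ℕ)
    (f : Fin n → R) (f₀ : R) (h : MvPolynomial (Fin n) R)
    (hh : h = ∑ i, C (f i) * X i + C f₀) (i : Fin n)
    (Aᵢ : Type*) [CommRing Aᵢ]
    [Algebra (MvPolynomial (Fin n) R ⧸ Ideal.span {h}) Aᵢ]
    [IsLocalization.Away (Ideal.Quotient.mk (Ideal.span {h}) (C (f i))) Aᵢ]
    [Algebra R Aᵢ] [IsScalarTower R (MvPolynomial (Fin n) R ⧸ Ideal.span {h}) Aᵢ]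
    [Algebra (Localization.Away (f i)) Aᵢ]
    [IsScalarTower R (Localization.Away (f i)) Aᵢ] :
    Nonempty (Aᵢ ≃ₐ[Localization.Away (f i)]
      MvPolynomial {j : Fin n // j ≠ i} (Localization.Away (f i))) := by
  exact ⟨{ toFun := forcingAlpha f f₀ i h Aᵢ hh
           invFun := forcingBeta f i h Aᵢ
           left_inv := forcingBeta_alpha f f₀ i h Aᵢ hh
           right_inv := forcingAlpha_beta f f₀ i h Aᵢ hh
           map_mul' := map_mul _
           map_add' := map_add _
           commutes' := forcingAlpha_commutes f f₀ i h Aᵢ hh }⟩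
end

section
/- Let R be a Noetherian integral domain and A the homogeneous forcing algebra for data (f_{ij}), i.e., A = R[T_1,...,T_n]/(h_1,...,h_m) with h_i = f_{i1}T_1 + ... + f_{in}T_n. If the forcing equations h_1,...,h_m form a regular sequence in B = R[T_1,...,T_n], then n ≥ m and the Fitting ideal I_{min(m,n)} generated by the maximal minors of the matrix (f_{ij}) is nonzero. -/
/-!
A relation `∑ gᵢ Fᵢ = 0` among the rows of `F` gives the syzygy `∑ C(gᵢ) hᵢ = 0` of the
forcing equations. Coefficients of a syzygy of a regular sequence lie in the ideal it
generates, and that ideal contains no nonzero constant, so all `gᵢ` vanish: the rows of `F`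
are linearly independent. Over the fraction field `K` of `R` this means that `m` of the columns
of `F` form a basis of `Kᵐ`, i.e. some maximal minor of `F` is a nonzero `m × m` determinant.
-/

open MvPolynomial RingTheory.Sequence

lemma Ideal.ofList_ofFn {S : Type*} [CommRing S] {m : ℕ} (r : Fin m → S) :
    Ideal.ofList (List.ofFn r) = Ideal.span (Set.range r) := by
  simp only [Ideal.ofList, List.mem_ofFn']
  rfl

theorem RingTheory.Sequence.IsWeaklyRegular.mem_span_of_sum_mul_eq_zero {S : Type*}
    [CommRing S] {m : ℕ} {r : Fin m → S} (hr : IsWeaklyRegular S (List.ofFn r))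
    {c : Fin m → S} (hc : ∑ i, c i * r i = 0) (i : Fin m) :
    c i ∈ Ideal.span (Set.range r) := by
  induction m with
  | zero => exact i.elim0
  | succ m ih =>
    set I := Ideal.span (Set.range fun j : Fin m => r j.castSucc)
    rw [List.ofFn_succ', List.concat_eq_append, isWeaklyRegular_append_iff,
      isWeaklyRegular_singleton_iff, Ideal.ofList_ofFn, smul_eq_mul, Ideal.mul_top] at hr
    have hI : I ≤ Ideal.span (Set.range r) := Ideal.span_mono (Set.range_comp_subset_range _ _)
    rw [Fin.sum_univ_castSucc] at hc
    have hlast : c (Fin.last m) ∈ I := by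
      refine mem_of_isSMulRegular_quotient_of_smul_mem hr.2 ?_
      rw [smul_eq_mul, mul_comm, eq_neg_of_add_eq_zero_right hc]
      exact I.neg_mem (I.sum_mem fun j _ => I.mul_mem_left _ (Ideal.subset_span ⟨j, rfl⟩))
    obtain ⟨d, hd⟩ := Ideal.mem_span_range_iff_exists_fun.mp hlast
    -- Substituting `c_last = ∑ dⱼ rⱼ` yields a syzygy of the shorter sequence.
    have hc' : ∑ j, (c j.castSucc + d j * r (Fin.last m)) * r j.castSucc = 0 := by
      simp only [add_mul, Finset.sum_add_distrib]
      rw [← hc, ← hd, Finset.sum_mul]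
      exact congrArg _ (Finset.sum_congr rfl fun j _ => mul_right_comm _ _ _)
    induction i using Fin.lastCases with
    | last => exact hI hlast
    | cast j =>
      have hr_last : r (Fin.last m) ∈ Ideal.span (Set.range r) := Ideal.subset_span ⟨_, rfl⟩
      exact (Ideal.add_mem_iff_left _ (Ideal.mul_mem_left _ (d j) hr_last)).mp
        (hI (ih hr.1 hc' j))

lemma linearIndependent_row_of_isWeaklyRegular {R : Type*} [CommRing R] {m n : ℕ}
    (F : Matrix (Fin m) (Fin n) R)
    (hreg : IsWeaklyRegular (MvPolynomial (Fin n) R)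
      (List.ofFn fun i => ∑ j, C (F i j) * X j)) :
    LinearIndependent R F.row := by
  set ℓ := Fintype.linearCombination R (X : Fin n → MvPolynomial (Fin n) R)
  have hℓ : ∀ v, ℓ v = ∑ j, C (v j) * X j := fun v => by
    simp only [ℓ, Fintype.linearCombination_apply, C_mul']
  rw [Fintype.linearIndependent_iff]
  intro g hg i
  have hsyz : ∑ i, C (g i) * ∑ j, C (F i j) * X j = 0 :=
    calc _ = ∑ i, g i • ℓ (F.row i) := by simp only [hℓ, C_mul']; rfl
      _ = ℓ (∑ i, g i • F.row i) := by simp only [map_sum, map_smul]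
      _ = 0 := by rw [hg, map_zero]
  have hker : Ideal.span (Set.range fun i => ∑ j, C (F i j) * X j) ≤
      RingHom.ker constantCoeff := by
    rw [Ideal.span_le]
    rintro _ ⟨i, rfl⟩
    simp
  simpa using hker (hreg.mem_span_of_sum_mul_eq_zero hsyz i)

lemma Matrix.exists_det_submatrix_ne_zero_of_linearIndependent_row {K : Type*} [Field K]
    {ι κ : Type*} [Fintype ι] [DecidableEq ι] [Fintype κ] (G : Matrix ι κ K)
    (hG : LinearIndependent K G.row) :
    ∃ c : ι → κ, Function.Injective c ∧ (G.submatrix id c).det ≠ 0 := by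
  have hspan : Submodule.span K (Set.range G.col) = ⊤ := by
    apply Submodule.eq_top_of_finrank_eq
    rw [← Matrix.rank_eq_finrank_span_cols, hG.rank_matrix, Module.finrank_fintype_fun_eq_card]
  obtain ⟨β, a, ha, hspan_a, hind⟩ := exists_linearIndependent' K G.col
  have : Fintype β := have := hind.finite; Fintype.ofFinite β
  have hcard : Fintype.card β = Fintype.card ι := by
    rw [linearIndependent_iff_card_eq_finrank_span.mp hind, Set.finrank, hspan_a, hspan,
      finrank_top, Module.finrank_fintype_fun_eq_card]
  let e : ι ≃ β := (Fintype.equivOfCardEq hcard).symm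
  refine ⟨a ∘ e, ha.comp e.injective, ?_⟩
  rw [← isUnit_iff_ne_zero, ← Matrix.isUnit_iff_isUnit_det,
    ← Matrix.linearIndependent_cols_iff_isUnit]
  exact hind.comp e e.injective

lemma Matrix.exists_det_submatrix_ne_zero_of_linearIndependent_row_of_isDomain {R : Type*}
    [CommRing R] [IsDomain R] {ι κ : Type*} [Fintype ι] [DecidableEq ι] [Fintype κ]
    (F : Matrix ι κ R) (hF : LinearIndependent R F.row) :
    ∃ c : ι → κ, Function.Injective c ∧ (F.submatrix id c).det ≠ 0 := by
  let K := FractionRing R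
  have hFK : LinearIndependent K (F.map (algebraMap R K)).row := by
    rw [← LinearIndependent.iff_fractionRing R K]
    have hinj : Function.Injective ((Algebra.linearMap R K).compLeft κ) :=
      fun _ _ h => funext fun j => IsFractionRing.injective R K (congrFun h j)
    exact hF.map' _ (LinearMap.ker_eq_bot.mpr hinj)
  obtain ⟨c, hc, hdet⟩ :=
    (F.map (algebraMap R K)).exists_det_submatrix_ne_zero_of_linearIndependent_row hFK
  refine ⟨c, hc, fun h0 => hdet ?_⟩
  rw [Matrix.submatrix_map, ← RingHom.mapMatrix_apply, ← RingHom.map_det, h0, map_zero]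

theorem homogeneous_forcing_regular_sequence_general {R : Type*} [CommRing R] [IsDomain R]
    (m n : ℕ) (F : Matrix (Fin m) (Fin n) R)
    (h : Fin m → MvPolynomial (Fin n) R)
    (hh : ∀ i, h i = ∑ j, C (F i j) * X j)
    (hreg : RingTheory.Sequence.IsRegular (MvPolynomial (Fin n) R) (List.ofFn h)) :
    n ≥ m ∧
    Ideal.span { d : R | ∃ (ri : Fin (min m n) → Fin m) (ci : Fin (min m n) → Fin n),
      Function.Injective ri ∧ Function.Injective ci ∧ d = (F.submatrix ri ci).det } ≠ ⊥ := by
  obtain rfl : h = fun i => ∑ j, C (F i j) * X j := funext hh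
  obtain ⟨c, hc, hdet⟩ := F.exists_det_submatrix_ne_zero_of_linearIndependent_row_of_isDomain
    (linearIndependent_row_of_isWeaklyRegular F hreg.toIsWeaklyRegular)
  have hmn : m ≤ n := by simpa using Fintype.card_le_of_injective c hc
  refine ⟨hmn, fun hbot => hdet ?_⟩
  let e : Fin (min m n) ≃ Fin m := finCongr (min_eq_left hmn)
  have hminor := Ideal.span_eq_bot.mp hbot ((F.submatrix id c).submatrix e e).det
    ⟨e, c ∘ e, e.injective, hc.comp e.injective, rfl⟩
  rwa [Matrix.det_submatrix_equiv_self] at hminor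

theorem homogeneous_forcing_regular_sequence {R : Type*} [CommRing R] [IsDomain R]
    [IsNoetherianRing R] (m n : ℕ) (F : Matrix (Fin m) (Fin n) R)
    (h : Fin m → MvPolynomial (Fin n) R)
    (hh : ∀ i, h i = ∑ j, C (F i j) * X j)
    (hreg : RingTheory.Sequence.IsRegular (MvPolynomial (Fin n) R) (List.ofFn h)) :
    n ≥ m ∧
    Ideal.span { d : R | ∃ (ri : Fin (min m n) → Fin m) (ci : Fin (min m n) → Fin n),
      Function.Injective ri ∧ Function.Injective ci ∧ d = (F.submatrix ri ci).det } ≠ ⊥ :=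
  homogeneous_forcing_regular_sequence_general m n F h hh hreg
end

section
/- Let R be a Noetherian normal domain with fraction field K, q ∈ K, and let φ: R[x] → R[q] ⊆ K be the R-algebra homomorphism sending x to q. Then: (1) if q ∉ R, the denominator ideal (R : q) = {b ∈ R : bq ∈ R} has codimension 1 in R; (2) if (R : q) = (b_1,...,b_m) with q = a_i/b_i for some a_i ∈ R, then the ideal I = {bx − a ∈ R[x] : q = a/b} is generated by b_1x − a_1, ..., b_mx − a_m; (3) ker φ = I, the ideal generated by all linear polynomials bx − a with bq = a. -/
noncomputable def idealHeight {R : Type*} [CommRing R] (I : Ideal R) : ℕ∞ :=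
  ⨅ (P : PrimeSpectrum R) (_ : I ≤ P.asIdeal), Order.height P

/-- The denominator ideal `(R : q) = {b ∈ R : bq ∈ R}` of an element `q` of the
fraction field of `R`. -/
def denomIdeal (R : Type*) [CommRing R] [IsDomain R] (q : FractionRing R) : Ideal R where
  carrier := {b : R | ∃ a : R, algebraMap R (FractionRing R) b * q = algebraMap R (FractionRing R) a}
  zero_mem' := ⟨0, by simp⟩
  add_mem' := by
    rintro x y ⟨a, ha⟩ ⟨b, hb⟩
    exact ⟨a + b, by rw [map_add, map_add, add_mul, ha, hb]⟩
  smul_mem' := by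
    rintro c x ⟨a, ha⟩
    exact ⟨c * a, by rw [smul_eq_mul, map_mul, map_mul, mul_assoc, ha]⟩

/-!
For (1), `(R : q)` is the annihilator of the class of `q` in the `R`-module `K/R`, so it lies
in an associated prime `P = (R : x)` of `K/R`. If `P x ⊆ P`, then `x` is integral over `R` and
hence in `R`, which is impossible; so `t x = u` for some `t ∈ P` and `u ∉ P`. Then `s u ∈ t R`
for every `s ∈ P`, so `P` is minimal over `(t)` and Krull's principal ideal theorem gives
`ht P ≤ 1`.

For (3), if `p(q) = 0` with leading coefficient `v`, then `v q` is integral over `R`, hence equals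
some `a ∈ R` by normality, and subtracting `(v X - a) X ^ (deg p - 1)` lowers the degree.
-/

open Polynomial

theorem idealHeight_eq_height {R : Type*} [CommRing R] (I : Ideal R) :
    idealHeight I = I.height := by
  refine le_antisymm ?_ (le_iInf₂ fun P hP => ?_)
  · rw [Ideal.height_eq_inf_minimalPrimes]
    refine le_iInf₂ fun J hJ => ?_
    have := hJ.isPrime
    exact (iInf₂_le (⟨J, this⟩ : PrimeSpectrum R) hJ.1.2).trans_eq
      (PrimeSpectrum.height_eq_orderHeight ⟨J, this⟩).symm
  · exact (Ideal.height_mono hP).trans_eq P.height_eq_orderHeight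

section DenomIdeal

variable {R : Type*} [CommRing R] [IsDomain R]

theorem mem_denomIdeal {q : FractionRing R} {b : R} :
    b ∈ denomIdeal R q ↔ ∃ a : R,
      algebraMap R (FractionRing R) b * q = algebraMap R (FractionRing R) a := Iff.rfl

theorem denomIdeal_ne_bot (q : FractionRing R) : denomIdeal R q ≠ ⊥ := by
  obtain ⟨⟨a, s⟩, hs⟩ := IsLocalization.surj (nonZeroDivisors R) q
  refine (Submodule.ne_bot_iff _).2 ⟨s, ⟨a, by rw [mul_comm]; exact hs⟩,
    nonZeroDivisors.ne_zero s.2⟩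

theorem denomIdeal_eq_colon (q : FractionRing R) :
    denomIdeal R q =
      (⊥ : Submodule R (FractionRing R ⧸ (1 : Submodule R (FractionRing R)))).colon
        {Submodule.Quotient.mk q} := by
  ext b
  rw [Submodule.mem_colon_singleton, Submodule.mem_bot, ← Submodule.Quotient.mk_smul,
    Submodule.Quotient.mk_eq_zero, Submodule.mem_one, mem_denomIdeal, Algebra.smul_def]
  exact exists_congr fun a => eq_comm

theorem denomIdeal_eq_top_iff {q : FractionRing R} :
    denomIdeal R q = ⊤ ↔ q ∈ (algebraMap R (FractionRing R)).range := by
  rw [Ideal.eq_top_iff_one, mem_denomIdeal, map_one, one_mul]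
  exact exists_congr fun a => eq_comm

theorem exists_denomIdeal_isPrime [IsNoetherianRing R] {q : FractionRing R}
    (hq : q ∉ (algebraMap R (FractionRing R)).range) :
    ∃ x : FractionRing R, (denomIdeal R x).IsPrime ∧ denomIdeal R q ≤ denomIdeal R x := by
  have hq' :
      (Submodule.Quotient.mk q : FractionRing R ⧸ (1 : Submodule R (FractionRing R))) ≠ 0 := by
    rwa [Ne, Submodule.Quotient.mk_eq_zero, Submodule.mem_one, ← RingHom.mem_range]
  obtain ⟨P, hP, hqP⟩ := exists_le_isAssociatedPrime_of_isNoetherianRing R _ hq'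
  obtain ⟨hPprime, y, rfl⟩ := isAssociatedPrime_iff.1 hP
  obtain ⟨x, rfl⟩ := Submodule.Quotient.mk_surjective _ y
  rw [← denomIdeal_eq_colon] at hPprime
  rw [← denomIdeal_eq_colon, ← denomIdeal_eq_colon] at hqP
  exact ⟨x, hPprime, hqP⟩

theorem exists_mem_denomIdeal_mul_eq_notMem [IsIntegrallyClosed R] [IsNoetherianRing R]
    {x : FractionRing R} (hx : x ∉ (algebraMap R (FractionRing R)).range) :
    ∃ t ∈ denomIdeal R x, ∃ u ∉ denomIdeal R x,
      algebraMap R (FractionRing R) t * x = algebraMap R (FractionRing R) u := by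
  by_contra! hstable
  set N : Submodule R (FractionRing R) :=
    Submodule.map (Algebra.linearMap R (FractionRing R)) (denomIdeal R x)
  have hN : N ≠ ⊥ := by
    rw [← Submodule.map_bot (Algebra.linearMap R (FractionRing R))]
    exact (Submodule.map_injective_of_injective (IsFractionRing.injective R (FractionRing R))).ne
      (denomIdeal_ne_bot x)
  have hNfg : N.FG := (IsNoetherian.noetherian (denomIdeal R x)).map _
  refine hx <| IsIntegrallyClosed.isIntegral_iff.1 <|
    isIntegral_of_smul_mem_submodule N hN hNfg x ?_
  rintro _ ⟨t, ht, rfl⟩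
  obtain ⟨u, hu⟩ := mem_denomIdeal.1 ht
  exact ⟨u, of_not_not fun hu' => hstable t ht u hu' hu, by simp [← hu, mul_comm]⟩

theorem denomIdeal_mem_minimalPrimes_span {x : FractionRing R} [(denomIdeal R x).IsPrime]
    {t u : R} (ht : t ∈ denomIdeal R x) (hu : u ∉ denomIdeal R x)
    (htu : algebraMap R (FractionRing R) t * x = algebraMap R (FractionRing R) u) :
    denomIdeal R x ∈ (Ideal.span {t}).minimalPrimes := by
  refine ⟨⟨inferInstance, (Ideal.span_singleton_le_iff_mem _).2 ht⟩, ?_⟩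
  rintro Q ⟨hQ, htQ⟩ hQP s hs
  rw [Ideal.span_singleton_le_iff_mem] at htQ
  obtain ⟨c, hc⟩ := mem_denomIdeal.1 hs
  have hsu : s * u = t * c := IsFractionRing.injective R (FractionRing R) <| by
    simp only [map_mul, ← htu, ← hc]
    ring
  have : s * u ∈ Q := hsu ▸ Q.mul_mem_right c htQ
  exact (hQ.mem_or_mem this).resolve_right fun huQ => hu (hQP huQ)

theorem height_denomIdeal [IsIntegrallyClosed R] [IsNoetherianRing R] {q : FractionRing R}
    (hq : q ∉ (algebraMap R (FractionRing R)).range) : (denomIdeal R q).height = 1 := by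
  obtain ⟨x, hxprime, hqx⟩ := exists_denomIdeal_isPrime hq
  have hx : x ∉ (algebraMap R (FractionRing R)).range :=
    denomIdeal_eq_top_iff.not.1 hxprime.ne_top
  obtain ⟨t, ht, u, hu, htu⟩ := exists_mem_denomIdeal_mul_eq_notMem hx
  refine le_antisymm ((Ideal.height_mono hqx).trans ?_) ?_
  · exact Ideal.height_le_one_of_isPrincipal_of_mem_minimalPrimes _ _
      (denomIdeal_mem_minimalPrimes_span ht hu htu)
  · rw [Order.one_le_iff_ne_zero, Ne, Ideal.height_eq_zero_iff_eq_bot]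
    exact denomIdeal_ne_bot q

end DenomIdeal

section LinearRelations

variable {R K : Type*} [CommRing R] [CommRing K] [Algebra R K]

variable (R) in
noncomputable def linearRelationIdeal (q : K) : Ideal R[X] :=
  Ideal.span {p | ∃ a b : R, algebraMap R K b * q = algebraMap R K a ∧ p = C b * X - C a}

theorem C_mul_X_sub_C_mem_linearRelationIdeal {q : K} {a b : R}
    (h : algebraMap R K b * q = algebraMap R K a) : C b * X - C a ∈ linearRelationIdeal R q :=
  Ideal.subset_span ⟨a, b, h, rfl⟩

theorem linearRelationIdeal_le_ker_aeval (q : K) :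
    linearRelationIdeal R q ≤ RingHom.ker (aeval (R := R) q) := by
  rw [linearRelationIdeal, Ideal.span_le]
  rintro _ ⟨a, b, h, rfl⟩
  simp [h]

theorem ker_aeval_le_linearRelationIdeal [IsIntegrallyClosed R] [IsFractionRing R K] (q : K) :
    RingHom.ker (aeval (R := R) q) ≤ linearRelationIdeal R q := by
  intro p hp
  induction hn : p.natDegree using Nat.strong_induction_on generalizing p with
  | _ n ih =>
  rw [RingHom.mem_ker] at hp
  rcases n with _ | n
  · rw [eq_C_of_natDegree_eq_zero hn] at hp ⊢
    rw [aeval_C, IsFractionRing.to_map_eq_zero_iff] at hp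
    rw [hp, map_zero]
    exact zero_mem _
  · obtain ⟨a, ha⟩ := IsIntegrallyClosed.isIntegral_iff.1 (isIntegral_leadingCoeff_smul p q hp)
    rw [Algebra.smul_def] at ha
    have hlin := C_mul_X_sub_C_mem_linearRelationIdeal ha.symm
    set r := p.eraseLead + C a * X ^ n
    have hdecomp : p = r + (C p.leadingCoeff * X - C a) * X ^ n := by
      conv_lhs => rw [← p.eraseLead_add_C_mul_X_pow, hn]
      ring
    have hr : aeval q r = 0 := by
      rwa [hdecomp, map_add, map_mul, RingHom.mem_ker.1 (linearRelationIdeal_le_ker_aeval q hlin),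
        zero_mul, add_zero] at hp
    have hr_deg : r.natDegree < n + 1 :=
      (natDegree_add_le _ _).trans_lt <| max_lt ((eraseLead_natDegree_le p).trans_lt (by omega))
        ((natDegree_C_mul_X_pow_le a n).trans_lt n.lt_succ_self)
    rw [hdecomp]
    exact add_mem (ih _ hr_deg (RingHom.mem_ker.2 hr) rfl) (Ideal.mul_mem_right _ _ hlin)

theorem ker_aeval_eq_linearRelationIdeal [IsIntegrallyClosed R] [IsFractionRing R K] (q : K) :
    RingHom.ker (aeval (R := R) q) = linearRelationIdeal R q :=
  (ker_aeval_le_linearRelationIdeal q).antisymm (linearRelationIdeal_le_ker_aeval q)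

end LinearRelations

theorem linearRelationIdeal_eq_span {R : Type*} [CommRing R] [IsDomain R] {q : FractionRing R}
    {ι : Type*} [Fintype ι] (b a : ι → R) (hb : denomIdeal R q = Ideal.span (Set.range b))
    (ha : ∀ i, algebraMap R (FractionRing R) (b i) * q = algebraMap R (FractionRing R) (a i)) :
    linearRelationIdeal R q = Ideal.span (Set.range fun i => C (b i) * X - C (a i)) := by
  refine le_antisymm ?_ (Ideal.span_le.2 ?_)
  · rw [linearRelationIdeal, Ideal.span_le]
    rintro _ ⟨a', b', hab', rfl⟩
    obtain ⟨c, rfl⟩ := (Submodule.mem_span_range_iff_exists_fun R).1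
      (hb ▸ mem_denomIdeal.2 ⟨a', hab'⟩)
    have ha' : a' = ∑ i, c i * a i := IsFractionRing.injective R (FractionRing R) <| by
      simp only [← hab', map_sum, smul_eq_mul, map_mul, Finset.sum_mul, mul_assoc, ha]
    have hlin : C (∑ i, c i • b i) * X - C a' = ∑ i, C (c i) * (C (b i) * X - C (a i)) := by
      simp only [ha', smul_eq_mul, map_sum, map_mul, Finset.sum_mul, ← Finset.sum_sub_distrib]
      exact Finset.sum_congr rfl fun i _ => by ring
    rw [SetLike.mem_coe, hlin]
    exact Ideal.sum_mem _ fun i _ => Ideal.mul_mem_left _ _ (Ideal.subset_span ⟨i, rfl⟩)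
  · rintro _ ⟨i, rfl⟩
    exact C_mul_X_sub_C_mem_linearRelationIdeal (ha i)

theorem denominator_ideal_theorem {R : Type*} [CommRing R] [IsDomain R]
    [IsIntegrallyClosed R] [IsNoetherianRing R] (q : FractionRing R)
    (I : Ideal (Polynomial R))
    (hI : I = Ideal.span {p : Polynomial R | ∃ a b : R,
      algebraMap R (FractionRing R) b * q = algebraMap R (FractionRing R) a ∧
      p = Polynomial.C b * Polynomial.X - Polynomial.C a}) :
    (q ∉ (algebraMap R (FractionRing R)).range → idealHeight (denomIdeal R q) = 1) ∧
    (∀ (m : ℕ) (b a : Fin m → R),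
      denomIdeal R q = Ideal.span (Set.range b) →
      (∀ i, algebraMap R (FractionRing R) (b i) * q = algebraMap R (FractionRing R) (a i)) →
      I = Ideal.span (Set.range fun i => Polynomial.C (b i) * Polynomial.X - Polynomial.C (a i))) ∧
    RingHom.ker (Polynomial.aeval (R := R) q) = I := by
  change I = linearRelationIdeal R q at hI
  subst hI
  exact ⟨fun hq => (idealHeight_eq_height _).trans (height_denomIdeal hq),
    fun _ b a hb ha => linearRelationIdeal_eq_span b a hb ha,
    ker_aeval_eq_linearRelationIdeal q⟩
end
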